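/- Let a, b, j, k be integers with a > 0, a ≡ 1 (mod 4), b² ≡ −1 (mod a), j ≡ 1 (mod 4), k ≡ 0 (mod 4) and gcd(j,k) = 1, and set α = ja + k(b+i) ∈ ℤ[i]. Assume N(α) = a (so α is a generator, congruent to 1 mod 4ℤ[i], of the primitive ideal [a, b+i] of norm a). Then (α/a)·Θ((b+i)/(2a)) = Θ((1−(−1)^b)/4 + i/2); in particular the right-hand side is Θ((1+i)/2) when b is odd and Θ(i/2) when b is even. -/

import Mathlib

open Complex

/-- `Θ(τ) = ∑_{m,n∈ℤ} e^{2πi(m²+n²)τ}`, the square of the Jacobi theta function. -/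
noncomputable def BigTheta (τ : ℂ) : ℂ :=
  ∑' p : ℤ × ℤ, Complex.exp (2 * Real.pi * Complex.I * ((p.1 : ℂ) ^ 2 + (p.2 : ℂ) ^ 2) * τ)

/-- The multiplier table: the 8th root of unity `i^(gtab u v b)` attached to a normalized
generator `u + vi` of the ideal `[a, b+i]`. -/
def gtab (u v b : ZMod 4) : ZMod 4 :=
  if v = 0 ∨ v = 2 then u - 1 + b * v
  else if u = 0 ∨ u = 2 then v + u * b
  else if u = 1 then (if v = 1 then (if b = 3 then 0 else 1) else (if b = 3 then 3 else 0))
  else (if v = 1 then (if b = 3 then 1 else 2) else (if b = 3 then 2 else 3))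

noncomputable def E (b : ℤ) : ℂ := (1 - (-1 : ℂ) ^ b) / 4 + Complex.I / 2

lemma E_eq (b : ℤ) : E b = (((b % 2 : ℤ) : ℂ) + I) / 2 := by
  rcases Int.even_or_odd b with he | ho
  · have h1 : (-1 : ℂ) ^ b = 1 := he.neg_one_zpow
    have h2 : b % 2 = 0 := Int.even_iff.mp he
    rw [E, h1, h2]
    norm_num
  · have h1 : (-1 : ℂ) ^ b = -1 := ho.neg_one_zpow
    have h2 : b % 2 = 1 := Int.odd_iff.mp ho
    rw [E, h1, h2]
    norm_num
    ring

lemma E_mod2 {b b' : ℤ} (h : b % 2 = b' % 2) : E b = E b' := by rw [E_eq, E_eq, h]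

lemma E_neg (b : ℤ) : E (-b) = E b := E_mod2 (by omega)

lemma castmod4 {x r : ℤ} (h : x % 4 = r) : (x : ZMod 4) = ((r : ℤ) : ZMod 4) := by
  rw [ZMod.intCast_eq_intCast_iff]
  show x % 4 = r % 4
  omega

lemma castmod8 {x r : ℤ} (h : x % 8 = r) : (x : ZMod 8) = ((r : ℤ) : ZMod 8) := by
  rw [ZMod.intCast_eq_intCast_iff]
  show x % 8 = r % 8
  omega

lemma im_pos_aux (β : ℤ) (m : ℤ) (hm : 0 < m) : 0 < (((β:ℂ) + I)/(2*(m:ℂ))).im := by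
  have h1 : ((β:ℂ) + I)/(2*(m:ℂ)) = ((β:ℝ) + I) / ((2*m : ℝ) : ℂ) := by push_cast; ring_nf
  rw [h1, Complex.div_ofReal_im]
  have h2 : ((β:ℝ) + I).im = 1 := by simp
  rw [h2]
  have h3 : (0:ℝ) < 2*m := by exact_mod_cast by omega
  positivity

lemma BigTheta_eq_sq {τ : ℂ} (hτ : 0 < τ.im) : BigTheta τ = jacobiTheta (2*τ) ^ 2 := by
  have h2 : 0 < (2*τ).im := by simp [Complex.mul_im]; linarith
  have hs0 : Summable fun n : ℤ => jacobiTheta₂_term n 0 (2*τ) :=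
    (summable_jacobiTheta₂_term_iff 0 (2*τ)).mpr h2
  have hterm : ∀ n : ℤ, jacobiTheta₂_term n 0 (2*τ) = cexp ((Real.pi:ℂ) * I * (n:ℂ)^2 * (2*τ)) := by
    intro n; simp [jacobiTheta₂_term]
  have hs : Summable fun n : ℤ => cexp ((Real.pi:ℂ) * I * (n:ℂ)^2 * (2*τ)) := by
    simpa only [hterm] using hs0
  have hsn : Summable fun n : ℤ => ‖cexp ((Real.pi:ℂ) * I * (n:ℂ)^2 * (2*τ))‖ :=
    summable_norm_iff.mpr hs
  rw [jacobiTheta, sq, tsum_mul_tsum_of_summable_norm hsn hsn, BigTheta]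
  refine tsum_congr fun p => ?_
  rw [← Complex.exp_add]
  congr 1
  ring

lemma BigTheta_add_int (τ : ℂ) (t : ℤ) : BigTheta (τ + t) = BigTheta τ := by
  refine tsum_congr fun p => ?_
  rw [mul_add, Complex.exp_add]
  have h1 : 2 * (Real.pi:ℂ) * I * ((p.1 : ℂ) ^ 2 + (p.2 : ℂ) ^ 2) * t
      = ((p.1^2 + p.2^2) * t : ℤ) * (2 * (Real.pi:ℂ) * I) := by push_cast; ring
  rw [h1, Complex.exp_int_mul_two_pi_mul_I, mul_one]

lemma BigTheta_inv {τ : ℂ} (hτ : 0 < τ.im) : BigTheta (-(4*τ)⁻¹) = (-2*I*τ) * BigTheta τ := by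
  have hτ0 : τ ≠ 0 := fun h => by simp [h] at hτ
  have h2 : 0 < (2*τ).im := by simp [Complex.mul_im]; linarith
  have h40 : (4*τ) ≠ 0 := mul_ne_zero (by norm_num) hτ0
  have hinv : 0 < (-(4*τ)⁻¹).im := by
    rw [Complex.neg_im, Complex.inv_im]
    have h4im : (4*τ).im = 4 * τ.im := by simp [Complex.mul_im]
    have hn : 0 < Complex.normSq (4*τ) := Complex.normSq_pos.mpr h40
    rw [h4im, neg_div, neg_neg]
    positivity
  set σ : UpperHalfPlane := ⟨2*τ, h2⟩ with hσ
  have hS := jacobiTheta_S_smul σ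
  have hcoe : ((ModularGroup.S • σ : UpperHalfPlane) : ℂ) = (-(2*τ))⁻¹ := by
    rw [UpperHalfPlane.modular_S_smul]
  rw [hcoe] at hS
  have hσc : (σ : ℂ) = 2*τ := rfl
  rw [hσc] at hS
  have harg : 2 * -(4*τ)⁻¹ = (-(2*τ))⁻¹ := by
    rw [inv_neg]
    field_simp
    ring
  rw [BigTheta_eq_sq hinv, BigTheta_eq_sq hτ, harg, hS, mul_pow]
  have hne : -I * (2*τ) ≠ 0 :=
    mul_ne_zero (neg_ne_zero.mpr I_ne_zero) (mul_ne_zero two_ne_zero hτ0)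
  have hsq : ((-I * (2*τ)) ^ ((1:ℂ)/2)) ^ 2 = -I * (2*τ) := by
    rw [sq, ← Complex.cpow_add _ _ hne]
    norm_num
  rw [hsq]
  ring

def c84 : ZMod 8 →+* ZMod 4 := ZMod.castHom (show (4:ℕ) ∣ 8 by norm_num) (ZMod 4)

set_option maxHeartbeats 4000000 in
lemma g_invert8 : ∀ u v b U V : ZMod 8,
    (u^2+v^2 = 1 ∨ u^2+v^2 = 5 ∨ u^2+v^2 = 2) →
    U*(u^2+v^2) = u - b*v → V*(u^2+v^2) = u*b + v →
    gtab (c84 u) (c84 v) (c84 b) = gtab (c84 U) (c84 V) (c84 (-b)) := by decide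

lemma gtab_translate : ∀ u v b m : ZMod 4, (u = 0 ∨ u = 2 ∨ v = 0 ∨ v = 2) →
    gtab u v (b + 2 * m) = gtab u v b := by decide

lemma val_prop8 : ∀ n b c : ZMod 8, (n = 1 ∨ n = 5 ∨ n = 2) → n * c = b^2+1 →
    (c = 1 ∨ c = 5 ∨ c = 2) := by decide

lemma main_induction : ∀ n : ℕ, 0 < n → ∀ b u v : ℤ,
    u^2 + v^2 = (n:ℤ) → ((n:ℤ) ∣ u - b*v) → ((n:ℤ) ∣ b^2 + 1) →
    (((n:ℤ) : ZMod 8) = 1 ∨ ((n:ℤ) : ZMod 8) = 5 ∨ ((n:ℤ) : ZMod 8) = 2) →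
    ((u:ℂ) + (v:ℂ)*I)/((n:ℤ):ℂ) * BigTheta (((b:ℂ) + I)/(2*((n:ℤ):ℂ)))
      = I ^ (gtab (u : ZMod 4) (v : ZMod 4) (b : ZMod 4)).val * BigTheta (E b) := by
  intro n
  induction n using Nat.strong_induction_on with
  | _ n IH =>
  intro hn b u v husq hdvd hb2 hval
  by_cases hn1 : n = 1
  · -- base case
    subst hn1
    have husq' : u^2 + v^2 = 1 := by exact_mod_cast husq
    simp only [Nat.cast_one, Int.cast_one, div_one, mul_one]
    have hshift : BigTheta (((b:ℂ) + I)/2) = BigTheta (E b) := by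
      have hbk : b = 2*((b - b % 2)/2) + b % 2 := by omega
      have harg : ((b:ℂ) + I)/2 = E b + ((b - b % 2)/2 : ℤ) := by
        rw [E_eq]
        have hbc : (b:ℂ) = 2*(((b - b % 2)/2 : ℤ):ℂ) + ((b % 2 : ℤ):ℂ) := by
          exact_mod_cast congrArg (fun x : ℤ => (x:ℂ)) hbk
        rw [hbc]
        push_cast
        ring
      rw [harg, BigTheta_add_int]
    rw [hshift]
    congr 1
    have e1 : ∀ β : ZMod 4, (gtab 1 0 β).val = 0 := by decide
    have e2 : ∀ β : ZMod 4, (gtab 3 0 β).val = 2 := by decide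
    have e3 : ∀ β : ZMod 4, (gtab 0 1 β).val = 1 := by decide
    have e4 : ∀ β : ZMod 4, (gtab 0 3 β).val = 3 := by decide
    have hu1 : -1 ≤ u ∧ u ≤ 1 := by constructor <;> nlinarith [sq_nonneg v]
    have hv1 : -1 ≤ v ∧ v ≤ 1 := by constructor <;> nlinarith [sq_nonneg u]
    have hcases : (u = 1 ∧ v = 0) ∨ (u = -1 ∧ v = 0) ∨ (u = 0 ∧ v = 1) ∨ (u = 0 ∧ v = -1) := by
      obtain ⟨h1, h2⟩ := hu1; obtain ⟨h3, h4⟩ := hv1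
      interval_cases u <;> interval_cases v <;> revert husq' <;> norm_num
    rcases hcases with ⟨hu, hv⟩ | ⟨hu, hv⟩ | ⟨hu, hv⟩ | ⟨hu, hv⟩ <;> subst hu <;> subst hv
    · rw [show ((1:ℤ) : ZMod 4) = 1 by decide, show ((0:ℤ) : ZMod 4) = 0 by decide, e1]
      norm_num
    · rw [castmod4 (show (-1:ℤ) % 4 = 3 by decide), show ((3:ℤ) : ZMod 4) = 3 by decide,
        show ((0:ℤ) : ZMod 4) = 0 by decide, e2]
      norm_num [Complex.I_sq]
    · rw [show ((0:ℤ) : ZMod 4) = 0 by decide, show ((1:ℤ) : ZMod 4) = 1 by decide, e3]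
      norm_num
    · rw [show ((0:ℤ) : ZMod 4) = 0 by decide, castmod4 (show (-1:ℤ) % 4 = 3 by decide),
        show ((3:ℤ) : ZMod 4) = 3 by decide, e4]
      norm_num [pow_succ, Complex.I_sq]
  · -- inductive step, n ≥ 2
    have hn2 : 2 ≤ n := by omega
    have hnZ : (2:ℤ) ≤ (n:ℤ) := by exact_mod_cast hn2
    have hn0 : ((n:ℤ)) ≠ 0 := by omega
    set q : ℤ := (b + n) / (2*n) with hq
    set b' : ℤ := b - 2*n*q with hb'
    have hb'e : b' + n = (b + n) % (2*n) := by rw [hb', hq, Int.emod_def]; ring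
    have hrange : -(n:ℤ) ≤ b' ∧ b' < n := by
      have h1 := Int.emod_nonneg (b + n) (by omega : (2*(n:ℤ)) ≠ 0)
      have h2 := Int.emod_lt_of_pos (b + n) (by omega : (0:ℤ) < 2*n)
      constructor <;> linarith
    obtain ⟨tq, htq⟩ : ∃ t, b - b' = 2*t := ⟨(n:ℤ)*q, by rw [hb']; ring⟩
    have hbb' : b % 2 = b' % 2 := by omega
    have hbdvd' : (n:ℤ) ∣ b'^2 + 1 := by
      obtain ⟨w, hw⟩ := hb2
      exact ⟨w - 4*q*b + 4*n*q^2, by rw [hb']; linear_combination hw⟩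
    have hbne : b' ≠ -(n:ℤ) := by
      intro h
      obtain ⟨w, hw⟩ := hbdvd'
      rw [h] at hw
      have hdd : (n:ℤ) ∣ 1 := ⟨w - n, by linear_combination hw⟩
      have := Int.le_of_dvd one_pos hdd
      omega
    have hb'sq : b'^2 ≤ ((n:ℤ) - 1)^2 := by
      have h1 : -(n:ℤ) + 1 ≤ b' := by rcases hrange with ⟨h, _⟩; omega
      have h2 : b' ≤ (n:ℤ) - 1 := by rcases hrange with ⟨_, h⟩; omega
      nlinarith
    set c : ℤ := (b'^2 + 1) / n with hcdef
    have hc : (n:ℤ) * c = b'^2 + 1 := Int.mul_ediv_cancel' hbdvd'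
    have hcpos : 0 < c := by nlinarith [sq_nonneg b']
    have hclt : c < n := by nlinarith
    have hdvd' : (n:ℤ) ∣ u - b'*v := by
      obtain ⟨w, hw⟩ := hdvd
      exact ⟨w + 2*q*v, by rw [hb']; linear_combination hw⟩
    have hdvdV : (n:ℤ) ∣ u*b' + v := by
      obtain ⟨w, hw⟩ := hdvd'
      obtain ⟨w2, hw2⟩ := hbdvd'
      exact ⟨b'*w + v*w2, by linear_combination b'*hw + v*hw2⟩
    set U : ℤ := (u - b'*v) / n with hUdef
    set V : ℤ := (u*b' + v) / n with hVdef
    have hU : (n:ℤ) * U = u - b'*v := Int.mul_ediv_cancel' hdvd'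
    have hV : (n:ℤ) * V = u*b' + v := Int.mul_ediv_cancel' hdvdV
    have hUV : U^2 + V^2 = c := by
      have hkey : (U^2 + V^2) * (n:ℤ)^2 = c * (n:ℤ)^2 := by
        linear_combination ((n:ℤ)*U + (u - b'*v)) * hU + ((n:ℤ)*V + (u*b'+v)) * hV
          + (b'^2+1) * husq + (-(n:ℤ)) * hc
      exact mul_right_cancel₀ (pow_ne_zero 2 hn0) hkey
    have hUplus : U + b'*V = u*c := by
      have hkey : (U + b'*V) * (n:ℤ) = u*c*(n:ℤ) := by
        linear_combination hU + b'*hV + (-u)*hc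
      exact mul_right_cancel₀ hn0 hkey
    have hcnat : ((c.toNat : ℕ) : ℤ) = c := Int.toNat_of_nonneg (le_of_lt hcpos)
    have hclt' : c.toNat < n := by omega
    have hcpos' : 0 < c.toNat := by omega
    have ih1 : U^2 + V^2 = ((c.toNat : ℕ) : ℤ) := by rw [hcnat]; exact hUV
    have ih2 : ((c.toNat : ℕ) : ℤ) ∣ U - (-b')*V := by
      rw [hcnat]; exact ⟨u, by linear_combination hUplus⟩
    have ih3 : ((c.toNat : ℕ) : ℤ) ∣ (-b')^2 + 1 := by
      rw [hcnat]; exact ⟨n, by linear_combination (-1:ℤ)*hc⟩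
    have hcZ8 : (((c.toNat : ℕ) : ℤ) : ZMod 8) = 1 ∨ (((c.toNat : ℕ) : ℤ) : ZMod 8) = 5
        ∨ (((c.toNat : ℕ) : ℤ) : ZMod 8) = 2 := by
      rw [hcnat]
      have hc8 : ((n:ℤ) : ZMod 8) * ((c:ℤ) : ZMod 8) = ((b' : ℤ) : ZMod 8)^2 + 1 := by
        have h := congrArg (fun x : ℤ => (x : ZMod 8)) hc
        push_cast at h
        exact_mod_cast h
      exact val_prop8 _ _ _ hval hc8
    have IHc := IH c.toNat hclt' hcpos' (-b') U V ih1 ih2 ih3 hcZ8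
    rw [hcnat] at IHc
    -- analytic part
    have hcC : ((n:ℤ):ℂ) * ((c:ℤ):ℂ) = ((b':ℤ):ℂ)^2 + 1 := by
      exact_mod_cast congrArg (fun x : ℤ => (x:ℂ)) hc
    have hcC0 : ((c:ℤ):ℂ) ≠ 0 := by exact_mod_cast (show c ≠ 0 by omega)
    have hnC0 : ((n:ℤ):ℂ) ≠ 0 := by exact_mod_cast (show (n:ℤ) ≠ 0 from hn0)
    have hnC0' : ((n:ℕ):ℂ) ≠ 0 := by exact_mod_cast (show n ≠ 0 by omega)
    set τ' : ℂ := (((-b' : ℤ):ℂ) + I)/(2*((c:ℤ):ℂ)) with hτ'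
    have hτ'im : 0 < τ'.im := im_pos_aux (-b') c hcpos
    have hbI0 : ((-b' : ℤ):ℂ) + I ≠ 0 := by
      intro h
      have him := congrArg Complex.im h
      simp at him
    have hstep1 : BigTheta (((b:ℂ) + I)/(2*((n:ℤ):ℂ))) = BigTheta (((b':ℂ) + I)/(2*((n:ℤ):ℂ))) := by
      have hbint : b = b' + 2*((n:ℤ)*q) := by rw [hb']; ring
      have hbC : (b:ℂ) = (b':ℂ) + 2*((n:ℤ):ℂ)*((q:ℤ):ℂ) := by
        rw [hbint]; push_cast; ring
      have harg : ((b:ℂ) + I)/(2*((n:ℤ):ℂ)) = ((b':ℂ) + I)/(2*((n:ℤ):ℂ)) + ((q:ℤ):ℂ) := by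
        rw [hbC]; field_simp [hnC0']; ring
      rw [harg]
      exact BigTheta_add_int _ q
    have hstep2 : ((b':ℂ) + I)/(2*((n:ℤ):ℂ)) = -(4*τ')⁻¹ := by
      rw [hτ']
      rw [show (4:ℂ)*((((-b' : ℤ):ℂ) + I)/(2*((c:ℤ):ℂ))) = (2*(((-b' : ℤ):ℂ) + I))/((c:ℤ):ℂ) by
        field_simp; ring]
      rw [inv_div, ← neg_div]
      rw [div_eq_div_iff (mul_ne_zero two_ne_zero hnC0) (mul_ne_zero two_ne_zero hbI0)]
      push_cast
      push_cast at hcC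
      linear_combination (2:ℂ)*hcC + 2*Complex.I_sq
    have hUC : ((n:ℤ):ℂ) * ((U:ℤ):ℂ) = (u:ℂ) - (b':ℂ)*(v:ℂ) := by
      exact_mod_cast congrArg (fun x : ℤ => (x:ℂ)) hU
    have hVC : ((n:ℤ):ℂ) * ((V:ℤ):ℂ) = (u:ℂ)*(b':ℂ) + (v:ℂ) := by
      exact_mod_cast congrArg (fun x : ℤ => (x:ℂ)) hV
    have hprod : ((u:ℂ) + (v:ℂ)*I) * (1 + I*(b':ℂ)) = ((n:ℤ):ℂ) * (((U:ℤ):ℂ) + ((V:ℤ):ℂ)*I) := by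
      linear_combination (-1:ℂ)*hUC - I*hVC + (v:ℂ)*(b':ℂ)*Complex.I_sq
    have hfac : -2*I*τ' = (1 + I*(b':ℂ))/((c:ℤ):ℂ) := by
      rw [hτ']
      push_cast
      field_simp
      linear_combination (-1:ℂ)*Complex.I_sq
    have hmult : ((u:ℂ) + (v:ℂ)*I)/((n:ℤ):ℂ) * (-2*I*τ') = (((U:ℤ):ℂ) + ((V:ℤ):ℂ)*I)/((c:ℤ):ℂ) := by
      rw [hfac, div_mul_div_comm, hprod, mul_div_mul_left _ _ hnC0]
    -- put the pieces together
    rw [hstep1, hstep2, BigTheta_inv hτ'im, ← mul_assoc, hmult, IHc, E_neg,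
      E_mod2 (show b' % 2 = b % 2 by omega)]
    -- now only the gtab powers differ
    have husq8 : ((u:ℤ):ZMod 8)^2 + ((v:ℤ):ZMod 8)^2 = ((n:ℕ):ZMod 8) := by
      have h := congrArg (fun x : ℤ => (x : ZMod 8)) husq
      push_cast at h
      exact_mod_cast h
    have h8a : ((u:ℤ):ZMod 8)^2 + ((v:ℤ):ZMod 8)^2 = 1 ∨ ((u:ℤ):ZMod 8)^2 + ((v:ℤ):ZMod 8)^2 = 5
        ∨ ((u:ℤ):ZMod 8)^2 + ((v:ℤ):ZMod 8)^2 = 2 := by rw [husq8]; exact_mod_cast hval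
    have h8b : ((U:ℤ):ZMod 8) * (((u:ℤ):ZMod 8)^2 + ((v:ℤ):ZMod 8)^2)
        = ((u:ℤ):ZMod 8) - ((b':ℤ):ZMod 8) * ((v:ℤ):ZMod 8) := by
      have h := congrArg (fun x : ℤ => (x : ZMod 8)) hU
      push_cast at h
      rw [husq8]
      linear_combination h
    have h8c : ((V:ℤ):ZMod 8) * (((u:ℤ):ZMod 8)^2 + ((v:ℤ):ZMod 8)^2)
        = ((u:ℤ):ZMod 8) * ((b':ℤ):ZMod 8) + ((v:ℤ):ZMod 8) := by
      have h := congrArg (fun x : ℤ => (x : ZMod 8)) hV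
      push_cast at h
      rw [husq8]
      linear_combination h
    have hginv := g_invert8 _ _ _ _ _ h8a h8b h8c
    rw [show -((b':ℤ):ZMod 8) = (((-b' : ℤ)):ZMod 8) by push_cast; ring] at hginv
    simp only [show ∀ x : ℤ, c84 ((x : ZMod 8)) = (x : ZMod 4) from fun x => map_intCast c84 x]
      at hginv
    -- hginv : gtab ↑u ↑v ↑b' = gtab ↑U ↑V ↑(-b')
    have htrans : (gtab (u : ZMod 4) (v : ZMod 4) (b : ZMod 4))
        = gtab (u : ZMod 4) (v : ZMod 4) (b' : ZMod 4) := by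
      rcases Int.even_or_odd (n:ℤ) with hne | hno
      · obtain ⟨w, hw⟩ := hne
        have h4 : b % 4 = b' % 4 := by
          obtain ⟨t4, ht4⟩ : ∃ t, b - b' = 4*t := ⟨w*q, by rw [hb', hw]; ring⟩
          omega
        rw [show (b : ZMod 4) = (b' : ZMod 4) by
          rw [ZMod.intCast_eq_intCast_iff]; show b % 4 = b' % 4; omega]
      · have hpar : Even u ∨ Even v := by
          by_contra hcon
          push_neg at hcon
          obtain ⟨h1, h2⟩ := hcon
          rw [Int.not_even_iff_odd] at h1 h2
          have heven : Even (u^2 + v^2) := (h1.pow).add_odd (h2.pow)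
          rw [husq] at heven
          exact (Int.not_odd_iff_even.mpr heven) hno
        have hz : (u : ZMod 4) = 0 ∨ (u : ZMod 4) = 2 ∨ (v : ZMod 4) = 0 ∨ (v : ZMod 4) = 2 := by
          rcases hpar with h | h
          · have h24 : u % 4 = 0 ∨ u % 4 = 2 := by
              have := Int.even_iff.mp h; omega
            rcases h24 with h' | h'
            · left; rw [castmod4 h']; decide
            · right; left; rw [castmod4 h']; decide
          · have h24 : v % 4 = 0 ∨ v % 4 = 2 := by
              have := Int.even_iff.mp h; omega
            rcases h24 with h' | h'
            · right; right; left; rw [castmod4 h']; decide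
            · right; right; right; rw [castmod4 h']; decide
        have hbz : (b : ZMod 4) = (b' : ZMod 4) + 2 * (((n:ℤ)*q : ℤ) : ZMod 4) := by
          have hbint : b = b' + 2*((n:ℤ)*q) := by rw [hb']; ring
          calc (b : ZMod 4) = ((b' + 2*((n:ℤ)*q) : ℤ) : ZMod 4) := by rw [← hbint]
            _ = _ := by push_cast; ring
        rw [hbz]
        have hz' : (u:ZMod 4) = 0 ∨ (u:ZMod 4) = 2 ∨ ((v:ZMod 4) = 0 ∨ (v:ZMod 4) = 2) := hz
        exact gtab_translate _ _ _ _ hz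
    rw [htrans, hginv]


/-- **Lemma**: for `α = ja + k(b+i)` a generator `≡ 1 (mod 4ℤ[i])` of the primitive ideal
`[a, b+i]` of norm `a`, one has `(α/a)·Θ((b+i)/(2a)) = Θ((1−(−1)^b)/4 + i/2)`. -/
theorem theta_transform_ideal (a b j k : ℤ) (ha : 0 < a) (ha4 : a % 4 = 1)
    (hb : a ∣ b ^ 2 + 1) (hj : j % 4 = 1) (hk : k % 4 = 0) (hjk : IsCoprime j k)
    (hnorm : (j * a + k * b) ^ 2 + k ^ 2 = a) :
    (((j : ℂ) * a + (k : ℂ) * ((b : ℂ) + Complex.I)) / (a : ℂ)) *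
        BigTheta (((b : ℂ) + Complex.I) / (2 * (a : ℂ))) =
      BigTheta ((1 - (-1 : ℂ) ^ b) / 4 + Complex.I / 2) := by
  have haNat : ((a.toNat : ℕ) : ℤ) = a := Int.toNat_of_nonneg ha.le
  set u : ℤ := j*a + k*b with hu
  have h1 : u^2 + k^2 = ((a.toNat:ℕ):ℤ) := by rw [haNat]; exact hnorm
  have h2 : ((a.toNat:ℕ):ℤ) ∣ u - b*k := by rw [haNat]; exact ⟨j, by rw [hu]; ring⟩
  have h3 : ((a.toNat:ℕ):ℤ) ∣ b^2+1 := by rw [haNat]; exact hb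
  have h4 : (((a.toNat:ℕ):ℤ) : ZMod 8) = 1 ∨ (((a.toNat:ℕ):ℤ) : ZMod 8) = 5
      ∨ (((a.toNat:ℕ):ℤ) : ZMod 8) = 2 := by
    rw [haNat]
    have h58 : a % 8 = 1 ∨ a % 8 = 5 := by omega
    rcases h58 with h | h
    · left; rw [castmod8 h]; decide
    · right; left; rw [castmod8 h]; decide
  have hpos : 0 < a.toNat := by omega
  have H := main_induction a.toNat hpos b u k h1 h2 h3 h4
  rw [haNat] at H
  have hu4 : (u : ZMod 4) = 1 := by
    have hcast : (u : ZMod 4) = (j:ZMod 4)*(a:ZMod 4) + (k:ZMod 4)*(b:ZMod 4) := by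
      rw [hu]; push_cast; ring
    rw [hcast, castmod4 hj, castmod4 hk, castmod4 ha4,
      show ((1:ℤ) : ZMod 4) = 1 by decide, show ((0:ℤ) : ZMod 4) = 0 by decide]
    ring
  have hk4 : (k : ZMod 4) = 0 := by
    rw [castmod4 hk]; decide
  rw [hu4, hk4, show ∀ β : ZMod 4, (gtab 1 0 β).val = 0 from by decide, pow_zero, one_mul] at H
  rw [show ((1 : ℂ) - (-1 : ℂ) ^ b) / 4 + Complex.I / 2 = E b from rfl]
  rw [show ((j : ℂ) * a + (k : ℂ) * ((b : ℂ) + Complex.I)) = (u:ℂ) + (k:ℂ)*I by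
    rw [hu]; push_cast; ring]
  exact H
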